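/- arXiv:2310.10459 — 14 statements merged into one kernel-verified Lean document; each statement's English description precedes it below -/
import Mathlib

section
/- Let y_n be the normalized ultraspherical polynomials defined by y_0 = 1, y_1(x) = x, and (n + 2λ) y_{n+1}(x) = 2(n + λ) x y_n(x) - n y_{n-1}(x) with λ > -1/2. Then for all real x, (1 + λ²/(n(n+2λ))) x² y_n(x)² - y_{n-1}(x) y_{n+1}(x) ≥ 0. -/
theorem ultraspherical_universal_turan
    (l : ℝ) (hl : l > -1/2) (y : ℕ → ℝ → ℝ)
    (h0 : ∀ x, y 0 x = 1) (h1 : ∀ x, y 1 x = x)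
    (hrec : ∀ n : ℕ, 1 ≤ n → ∀ x : ℝ,
      ((n : ℝ) + 2 * l) * y (n + 1) x = 2 * ((n : ℝ) + l) * x * y n x - (n : ℝ) * y (n - 1) x)
    (n : ℕ) (hn : 1 ≤ n) (x : ℝ) :
    (1 + l ^ 2 / ((n : ℝ) * ((n : ℝ) + 2 * l))) * x ^ 2 * (y n x) ^ 2
      - y (n - 1) x * y (n + 1) x ≥ 0 := by
  have hn1 : (1:ℝ) ≤ (n:ℝ) := by exact_mod_cast hn
  have hA : (n:ℝ) + 2 * l > 0 := by linarith
  have hnA : (n:ℝ) * ((n:ℝ) + 2 * l) > 0 := mul_pos (by linarith) hA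
  have hrec' := hrec n hn x
  have hD : l ^ 2 / ((n:ℝ) * ((n:ℝ) + 2 * l)) * ((n:ℝ) * ((n:ℝ) + 2 * l)) = l ^ 2 :=
    div_mul_cancel₀ _ (ne_of_gt hnA)
  have key : ((n:ℝ) * ((n:ℝ) + 2 * l)) *
      ((1 + l ^ 2 / ((n : ℝ) * ((n : ℝ) + 2 * l))) * x ^ 2 * (y n x) ^ 2
        - y (n - 1) x * y (n + 1) x)
      = (((n:ℝ) + l) * x * y n x - (n:ℝ) * y (n - 1) x) ^ 2 := by
    linear_combination x ^ 2 * (y n x) ^ 2 * hD - (n:ℝ) * y (n - 1) x * hrec'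
  nlinarith [sq_nonneg (((n:ℝ) + l) * x * y n x - (n:ℝ) * y (n - 1) x), key, hnA]
end

section
/- For λ > 0, θ = 2/(1+2λ), and 0 ≤ x ≤ 1, the function Δ₁(x) = (1/(1+2λ)) · ((1+2λ) x^{2+θ} - 2(1+λ)x² + 1) is nonnegative; that is, 1 - 2(1+λ) x² + (1+2λ) x^{2 + 2/(1+2λ)} ≥ 0, with equality at x = 1. -/
/-!
Weighted AM–GM with weights `1/(s+1)` and `s/(s+1)` applied to `1` and `x ^ (2 + 2/s)`, where
`s = 1 + 2λ`, gives `(s + 1) x² ≤ 1 + s x^(2 + 2/s)`, and `s + 1 = 2(1 + λ)`.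
-/

open Real

theorem Real.add_one_mul_rpow_le_one_add_mul_rpow {s : ℝ} (hs : 0 < s) (q : ℝ) {x : ℝ}
    (hx : 0 ≤ x) : (s + 1) * x ^ q ≤ 1 + s * x ^ (q * (s + 1) / s) := by
  have hs1 : 0 < s + 1 := by linarith
  have hweights : 1 / (s + 1) + s / (s + 1) = 1 := by field_simp; ring
  have amgm := geom_mean_le_arith_mean2_weighted (by positivity) (by positivity) zero_le_one
    (rpow_nonneg hx (q * (s + 1) / s)) hweights
  have hgeom : (x ^ (q * (s + 1) / s)) ^ (s / (s + 1)) = x ^ q := by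
    rw [← rpow_mul hx]
    congr 1
    field_simp
  rw [one_rpow, one_mul, hgeom] at amgm
  calc (s + 1) * x ^ q
      ≤ (s + 1) * (1 / (s + 1) * 1 + s / (s + 1) * x ^ (q * (s + 1) / s)) := by gcongr
    _ = 1 + s * x ^ (q * (s + 1) / s) := by field_simp

theorem turan_base_case_positive_lambda_general
    (l : ℝ) (hl : l > 0) (x : ℝ) (hx1 : 0 ≤ x) :
    1 - 2 * (1 + l) * x ^ 2 + (1 + 2 * l) * x ^ (2 + 2 / (1 + 2 * l)) ≥ 0 ∧
    1 - 2 * (1 + l) * (1 : ℝ) ^ 2 + (1 + 2 * l) * (1 : ℝ) ^ (2 + 2 / (1 + 2 * l)) = 0 := by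
  have hs : 0 < 1 + 2 * l := by linarith
  refine ⟨?_, by rw [one_rpow]; ring⟩
  have key := add_one_mul_rpow_le_one_add_mul_rpow hs 2 hx1
  have hexp : (2 : ℝ) * (1 + 2 * l + 1) / (1 + 2 * l) = 2 + 2 / (1 + 2 * l) := by
    field_simp
  rw [hexp, rpow_two] at key
  linarith

theorem turan_base_case_positive_lambda
    (l : ℝ) (hl : l > 0) (x : ℝ) (hx1 : 0 ≤ x) (hx2 : x ≤ 1) :
    1 - 2 * (1 + l) * x ^ 2 + (1 + 2 * l) * x ^ (2 + 2 / (1 + 2 * l)) ≥ 0 ∧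
    1 - 2 * (1 + l) * (1 : ℝ) ^ 2 + (1 + 2 * l) * (1 : ℝ) ^ (2 + 2 / (1 + 2 * l)) = 0 :=
  turan_base_case_positive_lambda_general l hl x hx1
end

section
/- Let λ > 0, n ≥ 1, θ = 2/(1+2λ), and 0 < x < 1. Define A = n(n+2λ+1)x^{2θ} - (n+1)(n+2λ), B = n(n+λ+1)x^{θ} - (n+1)(n+λ), C = (n+λ)(n+2λ+1)x^{θ} - (n+λ+1)(n+2λ). Then A² - 4x² B C > 0. -/
/-!
Put `y = x ^ θ ∈ (0, 1)`, so that `x = y ^ (λ + 1/2)`. Then `A`, `B`, `C` are polynomials in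
`y`, and `B + C < 0`. Since `4 B C ≤ (B + C) ^ 2`, it suffices to show `A < x (B + C) ≤ 0`.
Both sides agree at `y = 1`, and Bernoulli's inequality bounds `y ^ (λ + 1/2)` from above by
`1 + (λ + 1/2) (y - 1)` when `λ ≤ 1/2` and by `y / (y + (λ + 1/2) (1 - y))` when `λ ≥ 1/2`;
with either bound the difference of the two sides is `(1 - y) ^ 2` times a polynomial with
positive coefficients.
-/

open Real

lemma rpow_le_one_add_mul_sub_one {y a : ℝ} (hy : 0 ≤ y) (ha₀ : 0 ≤ a) (ha₁ : a ≤ 1) :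
    y ^ a ≤ 1 + a * (y - 1) := by
  simpa using rpow_one_add_le_one_add_mul_self (s := y - 1) (by linarith) ha₀ ha₁

lemma rpow_mul_add_mul_one_sub_le {y a : ℝ} (hy : 0 < y) (ha : 1 ≤ a) :
    y ^ a * (y + a * (1 - y)) ≤ y := by
  have hbern : 1 + a * (y⁻¹ - 1) ≤ (y ^ a)⁻¹ := by
    simpa [inv_rpow hy.le] using
      one_add_mul_self_le_rpow_one_add (s := y⁻¹ - 1) (by linarith [inv_pos.2 hy]) ha
  have hya : 0 < y ^ a := rpow_pos_of_pos hy a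
  calc y ^ a * (y + a * (1 - y)) = y ^ a * y * (1 + a * (y⁻¹ - 1)) := by
        field_simp
    _ ≤ y ^ a * y * (y ^ a)⁻¹ := by gcongr
    _ = y := by field_simp

lemma four_mul_sq_mul_mul_lt_sq {a b c x : ℝ} (h : a < x * (b + c)) (h₀ : x * (b + c) ≤ 0) :
    4 * x ^ 2 * b * c < a ^ 2 :=
  calc 4 * x ^ 2 * b * c ≤ (x * (b + c)) ^ 2 := by nlinarith [sq_nonneg (x * (b - c))]
    _ < a ^ 2 := by nlinarith

/-- `A`, `B`, `C` of the statement as polynomials in `y = x ^ θ`. -/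
def coeffA (n l y : ℝ) : ℝ := n * (n + 2 * l + 1) * y ^ 2 - (n + 1) * (n + 2 * l)

def coeffB (n l y : ℝ) : ℝ := n * (n + l + 1) * y - (n + 1) * (n + l)

def coeffC (n l y : ℝ) : ℝ := (n + l) * (n + 2 * l + 1) * y - (n + l + 1) * (n + 2 * l)

section
variable {n l y : ℝ}

lemma coeffB_add_coeffC_neg (hn : 0 ≤ n) (hl : 0 < l) (hy : y ≤ 1) :
    coeffB n l y + coeffC n l y < 0 := by
  have h : coeffB n l y + coeffC n l y
      = -(2 * l + (2 * n ^ 2 + 4 * n * l + 2 * n + 2 * l ^ 2 + l) * (1 - y)) := by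
    unfold coeffB coeffC; ring
  rw [h, neg_neg_iff_pos]
  have : 0 ≤ 1 - y := by linarith
  positivity

lemma coeffA_lt_one_add_mul_sub_one_mul (hn : 0 ≤ n) (hl : 0 < l) (hy : y ≠ 1) :
    coeffA n l y < (1 + (l + 1 / 2) * (y - 1)) * (coeffB n l y + coeffC n l y) := by
  have h : (1 + (l + 1 / 2) * (y - 1)) * (coeffB n l y + coeffC n l y) - coeffA n l y
      = (1 - y) ^ 2 * (2 * n * l + 2 * n ^ 2 * l + 4 * n * l ^ 2 + 2 * l ^ 3 + 2 * l ^ 2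
          + l / 2) := by
    unfold coeffA coeffB coeffC; ring
  rw [← sub_pos, h]
  have : 1 - y ≠ 0 := sub_ne_zero.2 hy.symm
  positivity

lemma coeffA_mul_lt_mul_coeffB_add_coeffC (hn : 0 ≤ n) (hl : 0 < l) (hy₀ : 0 ≤ y)
    (hy₁ : y < 1) :
    coeffA n l y * (y + (l + 1 / 2) * (1 - y)) < y * (coeffB n l y + coeffC n l y) := by
  have h : y * (coeffB n l y + coeffC n l y) - coeffA n l y * (y + (l + 1 / 2) * (1 - y))
      = (1 - y) ^ 2 * ((1 - y) * (n ^ 2 / 2 + n / 2 + n ^ 2 * l + 2 * n * l ^ 2 + 2 * n * l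
          + 2 * l ^ 2 + l) + y * (2 * n ^ 2 * l + 4 * n * l ^ 2 + 2 * n * l + 2 * l ^ 2 + l)) := by
    unfold coeffA coeffB coeffC; ring
  rw [← sub_pos, h]
  have : 0 < 1 - y := sub_pos.2 hy₁
  positivity

lemma coeffA_lt_rpow_mul_coeffB_add_coeffC (hn : 0 ≤ n) (hl : 0 < l) (hy₀ : 0 < y)
    (hy₁ : y < 1) :
    coeffA n l y < y ^ (l + 1 / 2) * (coeffB n l y + coeffC n l y) := by
  have hBC := coeffB_add_coeffC_neg hn hl hy₁.le
  rcases le_total (l + 1 / 2) 1 with ha | ha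
  · calc coeffA n l y < (1 + (l + 1 / 2) * (y - 1)) * (coeffB n l y + coeffC n l y) :=
          coeffA_lt_one_add_mul_sub_one_mul hn hl hy₁.ne
      _ ≤ y ^ (l + 1 / 2) * (coeffB n l y + coeffC n l y) :=
          mul_le_mul_of_nonpos_right
            (rpow_le_one_add_mul_sub_one hy₀.le (by positivity) ha) hBC.le
  · have : 0 < 1 - y := sub_pos.2 hy₁
    refine lt_of_mul_lt_mul_right ?_ (by positivity : 0 ≤ y + (l + 1 / 2) * (1 - y))
    calc coeffA n l y * (y + (l + 1 / 2) * (1 - y)) < y * (coeffB n l y + coeffC n l y) :=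
          coeffA_mul_lt_mul_coeffB_add_coeffC hn hl hy₀.le hy₁
      _ ≤ y ^ (l + 1 / 2) * (y + (l + 1 / 2) * (1 - y)) * (coeffB n l y + coeffC n l y) :=
          mul_le_mul_of_nonpos_right (rpow_mul_add_mul_one_sub_le hy₀ ha) hBC.le
      _ = y ^ (l + 1 / 2) * (coeffB n l y + coeffC n l y) * (y + (l + 1 / 2) * (1 - y)) := by
          ring

end

theorem resultant_positive_lambda_pos
    (l : ℝ) (hl : l > 0) (θ : ℝ) (hθ : θ = 2 / (1 + 2 * l))
    (n : ℝ) (hn : 1 ≤ n) (x : ℝ) (hx1 : 0 < x) (hx2 : x < 1) :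
    (n * (n + 2 * l + 1) * x ^ (2 * θ) - (n + 1) * (n + 2 * l)) ^ 2
      - 4 * x ^ 2 * (n * (n + l + 1) * x ^ θ - (n + 1) * (n + l))
        * ((n + l) * (n + 2 * l + 1) * x ^ θ - (n + l + 1) * (n + 2 * l)) > 0 := by
  have hθ₀ : 0 < θ := by rw [hθ]; positivity
  have hy₀ : 0 < x ^ θ := rpow_pos_of_pos hx1 θ
  have hy₁ : x ^ θ < 1 := rpow_lt_one hx1.le hx2 hθ₀
  have hx : x = (x ^ θ) ^ (l + 1 / 2) := by
    rw [← rpow_mul hx1.le, hθ, div_mul_eq_mul_div, show 2 * (l + 1 / 2) = 1 + 2 * l by ring,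
      div_self (by positivity), rpow_one]
  have hx2θ : x ^ (2 * θ) = (x ^ θ) ^ 2 := by rw [mul_comm, rpow_mul hx1.le, rpow_two]
  have hn₀ : 0 ≤ n := by linarith
  have hA := coeffA_lt_rpow_mul_coeffB_add_coeffC hn₀ hl hy₀ hy₁
  have hBC := coeffB_add_coeffC_neg hn₀ hl hy₁.le
  rw [← hx] at hA
  have key := four_mul_sq_mul_mul_lt_sq hA (mul_nonpos_of_nonneg_of_nonpos hx1.le hBC.le)
  rw [hx2θ]
  unfold coeffA coeffB coeffC at key
  linarith
end

section
/- For λ > 0, θ = 2/(1+2λ), 0 < x < 1, the function η(x) = 1 - (3+λ)x² + (1 + x² + λx²)x^θ is positive. -/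
theorem eta_positive
    (l : ℝ) (hl : l > 0) (θ : ℝ) (hθ : θ = 2 / (1 + 2 * l))
    (x : ℝ) (hx1 : 0 < x) (hx2 : x < 1) :
    1 - (3 + l) * x ^ 2 + (1 + x ^ 2 + l * x ^ 2) * x ^ θ > 0 := by
  have h2l : (0:ℝ) < 1 + 2 * l := by linarith
  set s : ℝ := 1 / (1 + 2 * l) with hs
  have hs0 : 0 < s := by positivity
  have hs1 : s < 1 := by
    rw [hs, div_lt_one h2l]; linarith
  have h1s : 0 < 1 - s := by linarith
  set t : ℝ := x ^ 2 with htdef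
  have ht0 : 0 < t := by positivity
  have ht1 : t < 1 := by
    have := pow_lt_one₀ (le_of_lt hx1) hx2 (two_ne_zero)
    simpa [htdef] using this
  have hθs : θ = 2 * s := by rw [hθ, hs]; ring
  have hxθ : x ^ θ = t ^ s := by
    rw [hθs, Real.rpow_mul hx1.le, htdef]
    norm_num
  have ham : t ^ (1 - s) ≤ (1 - s) * t + s := by
    have := Real.geom_mean_le_arith_mean2_weighted h1s.le hs0.le ht0.le zero_le_one
      (by ring : (1 - s) + s = 1)
    simpa using this
  have hmul : t ^ s * t ^ (1 - s) = t := by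
    rw [← Real.rpow_add ht0, show s + (1 - s) = 1 by ring, Real.rpow_one]
  have hu : 0 < t ^ s := Real.rpow_pos_of_pos ht0 s
  set u : ℝ := t ^ s with hudef
  set D : ℝ := (1 - s) * t + s with hD
  have hDpos : 0 < D := by nlinarith [mul_pos h1s ht0]
  have key : t ≤ u * D := by
    calc t = u * t ^ (1 - s) := hmul.symm
    _ ≤ u * D := by
        apply mul_le_mul_of_nonneg_left _ hu.le
        exact ham
  have hC : 0 < 1 + t + l * t := by nlinarith
  have step1 : (1 + t + l * t) * t ≤ (1 + t + l * t) * (u * D) :=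
    mul_le_mul_of_nonneg_left key hC.le
  have hQeq : (1 - (3 + l) * t) * D + (1 + t + l * t) * t
      = ((1 - t) * (1 - t + 3 * l * t)) / (1 + 2 * l) := by
    rw [hD, hs]
    field_simp
    ring
  have hQ : 0 < (1 - (3 + l) * t) * D + (1 + t + l * t) * t := by
    rw [hQeq]
    apply div_pos _ h2l
    apply mul_pos (by linarith)
    nlinarith
  have hexprD : 0 < (1 - (3 + l) * t + (1 + t + l * t) * u) * D := by
    nlinarith [step1, hQ]
  rw [hxθ]
  nlinarith [hexprD, hDpos]
end

section
/- For λ > 0, θ = 2/(1+2λ), and 1/√(1+λ) ≤ x < 1, the derivative of η(x) = 1 - (3+λ)x² + (1+x²+λx²)x^θ satisfies ((1+2λ)x/2)·η'(x) = (1 + 2(1+λ)²x²)x^θ - (2λ² + 7λ + 3)x² < 0. -/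
theorem eta_derivative_negative
    (l : ℝ) (hl : l > 0) (θ : ℝ) (hθ : θ = 2 / (1 + 2 * l))
    (x : ℝ) (hx1 : 1 / Real.sqrt (1 + l) ≤ x) (hx2 : x < 1) :
    (1 + 2 * (1 + l) ^ 2 * x ^ 2) * x ^ θ - (2 * l ^ 2 + 7 * l + 3) * x ^ 2 < 0 := by
  have h1l : (0:ℝ) < 1 + l := by linarith
  have hs : 0 < Real.sqrt (1 + l) := Real.sqrt_pos.mpr h1l
  have hx0 : 0 < x := lt_of_lt_of_le (by positivity) hx1
  have hθ0 : 0 < θ := by rw [hθ]; positivity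
  have hpow : x ^ θ < 1 := Real.rpow_lt_one hx0.le hx2 hθ0
  have hx2' : 1 / (1 + l) ≤ x ^ 2 := by
    have h := mul_le_mul hx1 hx1 (by positivity) hx0.le
    calc 1 / (1 + l) = (1 / Real.sqrt (1 + l)) * (1 / Real.sqrt (1 + l)) := by
          rw [div_mul_div_comm, one_mul, Real.mul_self_sqrt h1l.le]
      _ ≤ x * x := h
      _ = x ^ 2 := (sq x).symm
  have hkey : 1 + 2 * (1 + l) ^ 2 * x ^ 2 ≤ (2 * l ^ 2 + 7 * l + 3) * x ^ 2 := by
    have h : 1 ≤ (1 + l) * x ^ 2 := by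
      rw [div_le_iff₀ h1l] at hx2'; linarith [hx2']
    nlinarith [sq_nonneg x, hl]
  have hmulpos : 0 < 1 + 2 * (1 + l) ^ 2 * x ^ 2 := by positivity
  nlinarith [mul_lt_mul_of_pos_left hpow hmulpos]
end

section
/- For -1/2 < λ < 0 and all real n ≥ 1, the function g(n,λ) = 2·ln((n+1)(n+2λ+1)/(n+λ+1)²) - λ·ln(n(n+2λ+1)/((n+1)(n+2λ))) is positive. -/
theorem g_positive
    (l : ℝ) (hl1 : -1/2 < l) (hl2 : l < 0) (n : ℝ) (hn : 1 ≤ n) :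
    2 * Real.log ((n + 1) * (n + 2 * l + 1) / (n + l + 1) ^ 2)
      - l * Real.log (n * (n + 2 * l + 1) / ((n + 1) * (n + 2 * l))) > 0 := by
  have hn0 : 0 < n := by linarith
  have h2l : 0 < n + 2 * l := by linarith
  have h2l1 : 0 < n + 2 * l + 1 := by linarith
  have h1p : 0 < n + 1 := by linarith
  have hlp : 0 < n + l + 1 := by linarith
  have hA1 : 0 < (n + 1) * (n + 2 * l + 1) / (n + l + 1) ^ 2 := by positivity
  have hA2 : 0 < n * (n + 2 * l + 1) / ((n + 1) * (n + 2 * l)) := by positivity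
  have key : ∀ x : ℝ, 0 < x → 1 - x⁻¹ ≤ Real.log x := by
    intro x hx
    have h := Real.log_le_sub_one_of_pos (inv_pos.mpr hx)
    rw [Real.log_inv] at h
    linarith
  have k1 := key _ hA1
  have k2 := key _ hA2
  have hl : (0:ℝ) < -l := by linarith
  have b1 : 1 - ((n + 1) * (n + 2 * l + 1) / (n + l + 1) ^ 2)⁻¹
      = -l ^ 2 / ((n + 1) * (n + 2 * l + 1)) := by
    field_simp
    ring
  have b2 : 1 - (n * (n + 2 * l + 1) / ((n + 1) * (n + 2 * l)))⁻¹
      = -(2 * l) / (n * (n + 2 * l + 1)) := by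
    field_simp
    ring
  have k2' : (-l) * (1 - (n * (n + 2 * l + 1) / ((n + 1) * (n + 2 * l)))⁻¹)
      ≤ (-l) * Real.log (n * (n + 2 * l + 1) / ((n + 1) * (n + 2 * l))) :=
    mul_le_mul_of_nonneg_left k2 hl.le
  have step : 2 * (-l ^ 2 / ((n + 1) * (n + 2 * l + 1)))
      + (-l) * (-(2 * l) / (n * (n + 2 * l + 1))) > 0 := by
    rw [show 2 * (-l ^ 2 / ((n + 1) * (n + 2 * l + 1)))
        + (-l) * (-(2 * l) / (n * (n + 2 * l + 1)))
        = 2 * l ^ 2 / (n * (n + 1) * (n + 2 * l + 1)) from by field_simp; ring]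
    have hl2' : 0 < l ^ 2 := by nlinarith
    exact div_pos (by linarith) (by positivity)
  rw [b1] at k1
  rw [b2] at k2'
  linarith
end

section
/- For -1/2 < λ < 0 and real n ≥ 1, the partial derivative of g(n,λ) = 2·ln((n+1)(n+2λ+1)/(n+λ+1)²) - λ·ln(n(n+2λ+1)/((n+1)(n+2λ))) with respect to n equals -2λ²(3n + 2λ² + 3λ + 1)/(n(n+1)(n+λ+1)(n+2λ)(n+2λ+1)), and this is negative. -/
/-! Both logarithms are of ratios of products of linear factors `m + c`, so their derivatives are
signed sums of reciprocals `1 / (n + c)`; putting these over a common denominator gives the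
formula. Its sign comes from `2λ² + 3λ + 1 = (2λ + 1)(λ + 1) > 0` for `-1/2 < λ < 0`. -/

open Real

theorem HasDerivAt.log_div {f g : ℝ → ℝ} {f' g' x : ℝ} (hf : HasDerivAt f f' x)
    (hg : HasDerivAt g g' x) (hfx : f x ≠ 0) (hgx : g x ≠ 0) :
    HasDerivAt (fun m => Real.log (f m / g m)) (f' / f x - g' / g x) x :=
  ((hf.fun_div hg hgx).log (div_ne_zero hfx hgx)).congr_deriv (by field_simp)

theorem hasDerivAt_log_div_quadratics {a b c d x : ℝ} (ha : x + a ≠ 0) (hb : x + b ≠ 0)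
    (hc : x + c ≠ 0) (hd : x + d ≠ 0) :
    HasDerivAt (fun m => log ((m + a) * (m + b) / ((m + c) * (m + d))))
      (1 / (x + a) + 1 / (x + b) - 1 / (x + c) - 1 / (x + d)) x := by
  have hlin (e : ℝ) : HasDerivAt (fun m => m + e) 1 x := (hasDerivAt_id x).add_const e
  refine (((hlin a).fun_mul (hlin b)).log_div ((hlin c).fun_mul (hlin d)) (mul_ne_zero ha hb)
    (mul_ne_zero hc hd)).congr_deriv ?_
  field_simp
  ring

theorem g_derivative
    (l : ℝ) (hl1 : -1/2 < l) (hl2 : l < 0) (n : ℝ) (hn : 1 ≤ n) :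
    HasDerivAt (fun m : ℝ =>
        2 * Real.log ((m + 1) * (m + 2 * l + 1) / (m + l + 1) ^ 2)
          - l * Real.log (m * (m + 2 * l + 1) / ((m + 1) * (m + 2 * l))))
      (-2 * l ^ 2 * (3 * n + 2 * l ^ 2 + 3 * l + 1)
        / (n * (n + 1) * (n + l + 1) * (n + 2 * l) * (n + 2 * l + 1))) n ∧
    -2 * l ^ 2 * (3 * n + 2 * l ^ 2 + 3 * l + 1)
        / (n * (n + 1) * (n + l + 1) * (n + 2 * l) * (n + 2 * l + 1)) < 0 := by
  have h0 : 0 < n := by linarith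
  have h1 : 0 < n + 1 := by linarith
  have h2 : 0 < n + l + 1 := by linarith
  have h3 : 0 < n + 2 * l := by linarith
  have h4 : 0 < n + 2 * l + 1 := by linarith
  have hpos : 0 < 3 * n + 2 * l ^ 2 + 3 * l + 1 := by
    nlinarith [mul_pos (by linarith : (0 : ℝ) < 2 * l + 1) (by linarith : (0 : ℝ) < l + 1)]
  have hlog₁ := hasDerivAt_log_div_quadratics (x := n) (a := 1) (b := 2 * l + 1) (c := l + 1)
    (d := l + 1) (by linarith) (by linarith) (by linarith) (by linarith)
  have hlog₂ := hasDerivAt_log_div_quadratics (x := n) (a := 0) (b := 2 * l + 1) (c := 1)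
    (d := 2 * l) (by linarith) (by linarith) (by linarith) (by linarith)
  have hratio₁ (m : ℝ) : (m + 1) * (m + 2 * l + 1) / (m + l + 1) ^ 2
      = (m + 1) * (m + (2 * l + 1)) / ((m + (l + 1)) * (m + (l + 1))) := by ring
  have hratio₂ (m : ℝ) : m * (m + 2 * l + 1) / ((m + 1) * (m + 2 * l))
      = (m + 0) * (m + (2 * l + 1)) / ((m + 1) * (m + 2 * l)) := by ring
  simp_rw [hratio₁, hratio₂]
  refine ⟨((hlog₁.const_mul 2).sub (hlog₂.const_mul l)).congr_deriv ?_, ?_⟩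
  · rw [show n + (l + 1) = n + l + 1 by ring, show n + (2 * l + 1) = n + 2 * l + 1 by ring,
      add_zero]
    field_simp
    ring
  · refine div_neg_of_neg_of_pos (mul_neg_of_neg_of_pos ?_ hpos) (by apply_rules [mul_pos])
    nlinarith [sq_pos_of_neg hl2]
end

section
/- For the Legendre polynomials P_n (ultraspherical case λ = 1/2), the inequality |x|·P_n(x)² - P_{n-1}(x)·P_{n+1}(x) ≥ 0 holds for all n ≥ 1 and |x| ≤ 1. (This is the θ = 1 case of the sharper inequality with θ = 2/(1+2λ).) -/
set_option maxHeartbeats 1000000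

private lemma legendre_quad_step (m y a b : ℝ) (hm : 1 ≤ m) (hy0 : 0 ≤ y) (hy1 : y ≤ 1)
    (hhyp : 0 ≤ m*y*a^2 - (2*m+1)*y*a*b + (m+1)*b^2) :
    0 ≤ (m+2)*y*b^2 - (2*m+3)*y*a*b + (m+1)*a^2 := by
  by_cases hc : y*(2*m+3)^2 ≤ 4*(m+1)*(m+2)
  · nlinarith [sq_nonneg (2*(m+1)*a - (2*m+3)*y*b),
      mul_nonneg (mul_nonneg hy0 (by linarith : (0:ℝ) ≤ 4*(m+1)*(m+2) - y*(2*m+3)^2)) (sq_nonneg b)]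
  · push_neg at hc
    -- abbreviations (plain definitions)
    set p := (m+1)^2 with hpdef
    set q := m*(m+1) with hqdef
    set r := (m+1)*(m+2) with hrdef
    have hppos : (0:ℝ) < p := by positivity
    have hqpos : (0:ℝ) < q := by rw [hqdef]; nlinarith
    have hrpos : (0:ℝ) < r := by rw [hrdef]; nlinarith
    have hqr : q < r := by rw [hqdef, hrdef]; nlinarith
    have hc' : 4*r < y*(4*r+1) := by rw [hrdef]; nlinarith [hc]
    have hy0' : (0:ℝ) < y := by nlinarith [hc', hrpos]
    set L := y*((4*q+1)*y - 4*q) with hLdef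
    have hLaux : 4*q < y*(4*q+1) := by
      nlinarith [mul_lt_mul_of_pos_left hc' (show (0:ℝ) < 4*q+1 by linarith), hqr, hrpos]
    have hLpos : (0:ℝ) < L := by
      rw [hLdef]; apply mul_pos hy0'; nlinarith [hLaux]
    set Mneg := (4*p+2)*y^2 - 4*p with hMdef
    have hMnn : (0:ℝ) ≤ Mneg := by
      rw [hMdef]
      have h2 : (4*r)^2 < (y*(4*r+1))^2 := by nlinarith [hc', hrpos]
      rw [hpdef] at *
      rw [hrdef] at h2
      nlinarith [h2, hm]
    have hu0 : (0:ℝ) ≤ 1 - y := by linarith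
    have hu1 : (1-y)*(4*r+1) < 1 := by nlinarith [hc']
    have hu2 : ((1-y)*(4*r+1))^2 < 1 := by
      nlinarith [hu1, mul_nonneg hu0 (by linarith : (0:ℝ) ≤ 4*r+1)]
    have hA2 : (4*p+2)*m*(1-y)^2 < 2 := by
      have hle : (4*p+2)*m < 2*(4*r+1)^2 := by
        rw [hpdef, hrdef]; nlinarith [hm]
      nlinarith [hu2, hle,
        mul_nonneg (by positivity : (0:ℝ) ≤ (4*p+2)*m)
          (by linarith : (0:ℝ) ≤ 1 - ((1-y)*(4*r+1))^2)]
    set A := 2*L*(m+1) - Mneg*m*y with hAdef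
    have hAeq : A = y * (2 + 2*(1-y)*(m-1) - (4*p+2)*m*(1-y)^2) := by
      rw [hAdef, hLdef, hMdef, hpdef, hqdef]; ring
    have hApos : (0:ℝ) < A := by
      rw [hAeq]
      apply mul_pos hy0'
      nlinarith [hA2, mul_nonneg hu0 (by linarith : (0:ℝ) ≤ m - 1)]
    set B := -2*L*y*(2*m+3) + Mneg*y*(2*m+1) with hBdef
    set D := 16*p*(1-y)^2*(p*(1-y)*(1+3*y) + 3*y^2) with hDdef
    have hDnn : (0:ℝ) ≤ D := by
      rw [hDdef]
      have h5 : (0:ℝ) ≤ p*(1-y)*(1+3*y) + 3*y^2 := by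
        nlinarith [mul_nonneg (mul_nonneg hppos.le hu0) (by linarith : (0:ℝ) ≤ 1+3*y),
          sq_nonneg y]
      have h6 : (0:ℝ) ≤ 16*p*(1-y)^2 := by positivity
      exact mul_nonneg h6 h5
    have key : 8*A*L*((m+2)*y*b^2 - (2*m+3)*y*a*b + (m+1)*a^2)
        = (2*A*a + B*b)^2 + L*D*b^2
          + 4*A*Mneg*(m*y*a^2 - (2*m+1)*y*a*b + (m+1)*b^2) := by
      rw [hAdef, hBdef, hDdef, hLdef, hMdef, hpdef, hqdef]; ring
    have hRHS : (0:ℝ) ≤ (2*A*a + B*b)^2 + L*D*b^2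
          + 4*A*Mneg*(m*y*a^2 - (2*m+1)*y*a*b + (m+1)*b^2) := by
      have t1 : (0:ℝ) ≤ (2*A*a + B*b)^2 := sq_nonneg _
      have t2 : (0:ℝ) ≤ L*D*b^2 :=
        mul_nonneg (mul_nonneg hLpos.le hDnn) (sq_nonneg b)
      have t3 : (0:ℝ) ≤ 4*A*Mneg*(m*y*a^2 - (2*m+1)*y*a*b + (m+1)*b^2) :=
        mul_nonneg (mul_nonneg (by linarith : (0:ℝ) ≤ 4*A) hMnn) hhyp
      linarith
    have h8 : (0:ℝ) < 8*A*L := by positivity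
    have h9 : 8*A*L*0 ≤ 8*A*L*((m+2)*y*b^2 - (2*m+3)*y*a*b + (m+1)*a^2) := by
      rw [mul_zero, key]; exact hRHS
    exact le_of_mul_le_mul_left (by simpa using h9) h8

theorem legendre_turan
    (P : ℕ → ℝ → ℝ)
    (h0 : ∀ x, P 0 x = 1) (h1 : ∀ x, P 1 x = x)
    (hrec : ∀ n : ℕ, 1 ≤ n → ∀ x : ℝ,
      ((n : ℝ) + 1) * P (n + 1) x = (2 * (n : ℝ) + 1) * x * P n x - (n : ℝ) * P (n - 1) x)
    (n : ℕ) (hn : 1 ≤ n) (x : ℝ) (hx : |x| ≤ 1) :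
    |x| * (P n x) ^ 2 - P (n - 1) x * P (n + 1) x ≥ 0 := by
  -- parity: P k (-y) = (-1)^k * P k y
  have hpar : ∀ k : ℕ, ∀ y : ℝ, P k (-y) = (-1)^k * P k y := by
    intro k
    induction k using Nat.strong_induction_on with
    | _ k ih =>
      match k with
      | 0 => intro y; simp [h0]
      | 1 => intro y; simp [h1]
      | (j+2) =>
        intro y
        have h2 := hrec (j+1) (by omega) (-y)
        have h3 := hrec (j+1) (by omega) y
        simp only [Nat.add_sub_cancel] at h2 h3
        rw [ih (j+1) (by omega) y, ih j (by omega) y] at h2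
        have hcast : ((j:ℝ)+1+1) ≠ 0 := by positivity
        have hgoal : ((j:ℝ)+1+1) * P (j+2) (-y) = ((j:ℝ)+1+1) * ((-1)^(j+2) * P (j+2) y) := by
          push_cast at h2 h3 ⊢
          linear_combination h2 - (-1:ℝ)^(j+2) * h3
        exact mul_left_cancel₀ hcast hgoal
  -- main inequality for y ∈ [0,1]
  have main : ∀ k : ℕ, 1 ≤ k → ∀ y : ℝ, 0 ≤ y → y ≤ 1 →
      y * P k y ^ 2 - P (k-1) y * P (k+1) y ≥ 0 := by
    intro k hk
    induction k, hk using Nat.le_induction with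
    | base =>
      intro y hy0 hy1
      have h2 := hrec 1 le_rfl y
      norm_num [h0, h1] at h2
      simp only [Nat.sub_self, h0, h1]
      nlinarith [h2, mul_nonneg (sq_nonneg (y-1)) (by linarith : (0:ℝ) ≤ 2*y+1)]
    | succ k hk ih =>
      intro y hy0 hy1
      have hm : (1:ℝ) ≤ (k:ℝ) := by exact_mod_cast hk
      have hih := ih y hy0 hy1
      have hrn := hrec k hk y
      have hrn1 := hrec (k+1) (by omega) y
      simp only [Nat.add_sub_cancel] at hrn1
      push_cast at hrn hrn1
      have hhyp : 0 ≤ (k:ℝ)*y*(P k y)^2 - (2*(k:ℝ)+1)*y*(P k y)*(P (k+1) y)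
          + ((k:ℝ)+1)*(P (k+1) y)^2 := by
        have heq : (k:ℝ) * (y * P k y ^ 2 - P (k-1) y * P (k+1) y)
            = (k:ℝ)*y*(P k y)^2 - (2*(k:ℝ)+1)*y*(P k y)*(P (k+1) y)
              + ((k:ℝ)+1)*(P (k+1) y)^2 := by
          linear_combination (-(P (k+1) y)) * hrn
        have hmm : (0:ℝ) ≤ (k:ℝ) * (y * P k y ^ 2 - P (k-1) y * P (k+1) y) :=
          mul_nonneg (by linarith) hih
        linarith [heq ▸ hmm]
      have hg := legendre_quad_step (k:ℝ) y (P k y) (P (k+1) y) hm hy0 hy1 hhyp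
      simp only [Nat.add_sub_cancel]
      have heq2 : ((k:ℝ)+2) * (y * P (k+1) y ^ 2 - P k y * P (k+1+1) y)
          = ((k:ℝ)+2)*y*(P (k+1) y)^2 - (2*(k:ℝ)+3)*y*(P k y)*(P (k+1) y)
            + ((k:ℝ)+1)*(P k y)^2 := by
        linear_combination (-(P k y)) * hrn1
      have hk2 : (0:ℝ) < (k:ℝ)+2 := by linarith
      by_contra hcon
      push_neg at hcon
      nlinarith [heq2, hg, mul_pos hk2 (show (0:ℝ) < -(y * P (k+1) y ^ 2 - P k y * P (k+1+1) y) by linarith)]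
  -- assemble
  rcases le_or_gt 0 x with hx0 | hx0
  · rw [abs_of_nonneg hx0] at hx ⊢
    exact main n hn x hx0 hx
  · rw [abs_of_neg hx0] at hx ⊢
    have hmain := main n hn (-x) (by linarith) hx
    have e : ∀ j : ℕ, P j x = (-1)^j * P j (-x) := by
      intro j
      have := hpar j (-x)
      rwa [neg_neg] at this
    rw [e n, e (n-1), e (n+1)]
    have hsq : ((-1:ℝ)^n * P n (-x))^2 = P n (-x)^2 := by
      rw [mul_pow, ← pow_mul, mul_comm n 2, pow_mul]
      norm_num
    have hprod : ((-1:ℝ)^(n-1) * P (n-1) (-x)) * ((-1:ℝ)^(n+1) * P (n+1) (-x))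
        = P (n-1) (-x) * P (n+1) (-x) := by
      have hexp : (n-1) + (n+1) = 2*n := by omega
      have hone : ((-1:ℝ)^(n-1)) * ((-1:ℝ)^(n+1)) = 1 := by
        rw [← pow_add, hexp, pow_mul]; norm_num
      calc ((-1:ℝ)^(n-1) * P (n-1) (-x)) * ((-1:ℝ)^(n+1) * P (n+1) (-x))
          = (((-1:ℝ)^(n-1)) * ((-1:ℝ)^(n+1))) * (P (n-1) (-x) * P (n+1) (-x)) := by ring
        _ = P (n-1) (-x) * P (n+1) (-x) := by rw [hone, one_mul]
    rw [hsq, hprod]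
    exact hmain
end

section
/- Let p_n be symmetric polynomials orthogonal on [-1,1] normalized by p_n(1) = 1, defined by p_{-1} = 0, p_0 = 1, and (1 - a_n) p_{n+1}(x) = x p_n(x) - a_n p_{n-1}(x) with 1/2 < a_n < 1 for n ≥ 1 (a_0 = 0), where (a_n)_{n≥1} is decreasing. If θ = inf over n ≥ 1 of [2·log((1-a_n)a_{n+1} / ((1-a_{n+1})a_n))] / [log(4(1-a_n)a_{n+1}² / a_n)], then |x|^θ p_n(x)² - p_{n-1}(x) p_{n+1}(x) ≥ 0 for all n ≥ 1 and |x| ≤ 1. -/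
private lemma turan_nonneg_of_mul {c f : ℝ} (hc : 0 < c) (h : 0 ≤ c * f) : 0 ≤ f := by
  by_contra h'
  push_neg at h'
  nlinarith [mul_neg_of_pos_of_neg hc h']

private lemma turan_core (a a' u x v : ℝ) (ha' : 1/2 < a') (haa : a' ≤ a) (ha1 : a < 1)
    (hu0 : 0 < u) (hu1 : u ≤ 1) (hx0 : 0 < x^2) (hxu : x^2 ≤ u)
    (hC1 : (1-a)*a' ≤ (1-a')*a*u)
    (hF : 0 ≤ (1-a)*v^2 - x^2*v + a*u*x^2)
    (hG : (1-a')*u*v^2 - x^2*v + a'*x^2 < 0) : False := by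
  have hbpos : (0:ℝ) < 1 - a := by linarith
  have hgpos : (0:ℝ) < 1 - a' := by linarith
  have hapos : (0:ℝ) < a := by linarith
  have ha'pos : (0:ℝ) < a' := by linarith
  have fact1 : 1 < v := by
    by_contra h
    push_neg at h
    have h1 : 0 ≤ (1-a')*(u - x^2)*v^2 :=
      mul_nonneg (mul_nonneg hgpos.le (by linarith)) (sq_nonneg v)
    have hgv : (1-a')*v ≤ (1-a') := by nlinarith
    have h2 : 0 ≤ x^2 * ((1 - v) * (a' - (1-a')*v)) :=
      mul_nonneg hx0.le (mul_nonneg (by linarith) (by linarith))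
    have hsum : (1-a')*u*v^2 - x^2*v + a'*x^2
        = (1-a')*(u - x^2)*v^2 + x^2 * ((1 - v) * (a' - (1-a')*v)) := by ring
    linarith [hsum ▸ (add_nonneg h1 h2)]
  have fact2 : (1-a')*v < a' := by
    by_contra h
    push_neg at h
    have h1 : 0 ≤ (1-a')*(u - x^2)*v^2 :=
      mul_nonneg (mul_nonneg hgpos.le (by linarith)) (sq_nonneg v)
    have h2 : 0 ≤ x^2 * ((v - 1) * ((1-a')*v - a')) :=
      mul_nonneg hx0.le (mul_nonneg (by linarith) (by linarith))
    have hsum : (1-a')*u*v^2 - x^2*v + a'*x^2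
        = (1-a')*(u - x^2)*v^2 + x^2 * ((v - 1) * ((1-a')*v - a')) := by ring
    linarith [hsum ▸ (add_nonneg h1 h2)]
  have hstar : (1-a)*a' - a*(1-a')*u^2 < ((1-a) - (1-a')*u)*v := by
    have h1 : 0 ≤ (1-a')*u*((1-a)*v^2 - x^2*v + a*u*x^2) :=
      mul_nonneg (mul_nonneg hgpos.le hu0.le) hF
    have h3 : (1-a)*((1-a')*u*v^2 - x^2*v + a'*x^2) < 0 :=
      mul_neg_of_pos_of_neg hbpos hG
    have hid : (1-a')*u*((1-a)*v^2 - x^2*v + a*u*x^2)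
        - (1-a)*((1-a')*u*v^2 - x^2*v + a'*x^2)
        = x^2 * (((1-a) - (1-a')*u)*v + a*(1-a')*u^2 - (1-a)*a') := by ring
    have h4 : 0 < x^2 * (((1-a) - (1-a')*u)*v + a*(1-a')*u^2 - (1-a)*a') := by
      rw [← hid]; linarith
    by_contra h
    push_neg at h
    nlinarith [mul_nonpos_of_nonneg_of_nonpos hx0.le
      (show ((1-a) - (1-a')*u)*v + a*(1-a')*u^2 - (1-a)*a' ≤ 0 by linarith)]
  by_cases hbg : (1-a) ≤ (1-a')*u
  · have hau : (1-a) ≤ a*u := by nlinarith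
    have h1' : (1-a) ≤ u - a*u^2 := by
      nlinarith [mul_nonneg (by linarith : (0:ℝ) ≤ 1 - u) (by linarith : (0:ℝ) ≤ a*u - (1-a))]
    have h5 : 0 ≤ ((1-a')*u - (1-a)) * (v - 1) :=
      mul_nonneg (by linarith) (by linarith)
    nlinarith [mul_le_mul_of_nonneg_left h1' hgpos.le]
  · push_neg at hbg
    have hgu : (1-a')*u < a' := by linarith
    have hkey : (1-a)*a'^2 ≤ (1-a')*u*(a' - a*(1-a')*u) := by
      nlinarith [mul_nonneg (by linarith : (0:ℝ) ≤ a*(1-a')*u - (1-a)*a')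
        (by linarith : (0:ℝ) ≤ a' - (1-a')*u)]
    have h2 : (1-a')*(((1-a) - (1-a')*u)*v) < ((1-a) - (1-a')*u)*a' := by
      nlinarith [mul_pos (show (0:ℝ) < (1-a) - (1-a')*u by linarith)
        (show (0:ℝ) < a' - (1-a')*v by linarith)]
    have h6 := mul_lt_mul_of_pos_left hstar hgpos
    linarith [h6, h2, hkey]

private lemma turan_step (a a' u x s t : ℝ) (ha' : 1/2 < a') (haa : a' ≤ a) (ha1 : a < 1)
    (hu0 : 0 ≤ u) (hu1 : u ≤ 1) (hxu : x^2 ≤ u)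
    (hor : x^2 ≤ 4*a'*(1-a')*u ∨ (1-a)*a' ≤ (1-a')*a*u)
    (hF : 0 ≤ (1-a)*t^2 - x*(s*t) + a*u*s^2) :
    0 ≤ (1-a')*u*t^2 - x*(s*t) + a'*s^2 := by
  have hgpos : (0:ℝ) < 1 - a' := by linarith
  have ha'pos : (0:ℝ) < a' := by linarith
  by_contra hG
  push_neg at hG
  have hP : 0 ≤ (1-a')*u*t^2 + a'*s^2 :=
    add_nonneg (mul_nonneg (mul_nonneg hgpos.le hu0) (sq_nonneg t))
      (mul_nonneg ha'pos.le (sq_nonneg s))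
  rcases hor with hA | hC1
  · have h1 : 0 < x*(s*t) := by linarith
    have h2 : ((1-a')*u*t^2 + a'*s^2)^2 < (x*(s*t))^2 := by
      nlinarith [hP, hG, h1]
    have h3 : (x*(s*t))^2 ≤ 4*a'*(1-a')*u*(s*t)^2 := by
      nlinarith [mul_le_mul_of_nonneg_right hA (sq_nonneg (s*t))]
    nlinarith [sq_nonneg ((1-a')*u*t^2 - a'*s^2), h2, h3]
  · have hx0 : 0 < x^2 := by
      rcases eq_or_lt_of_le (sq_nonneg x) with h | h
      · exfalso
        have hx : x = 0 := by nlinarith [sq_nonneg x]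
        rw [hx] at hG
        nlinarith [hP]
      · exact h
    have hu0' : 0 < u := lt_of_lt_of_le hx0 hxu
    have hs0 : s ≠ 0 := by
      intro h
      rw [h] at hG
      nlinarith [mul_nonneg (mul_nonneg hgpos.le hu0) (sq_nonneg t)]
    have hs2 : 0 < s^2 := by positivity
    set v := x*t/s with hv
    have hGv : (1-a')*u*v^2 - x^2*v + a'*x^2 < 0 := by
      have hid : (1-a')*u*v^2 - x^2*v + a'*x^2
          = (x^2/s^2) * ((1-a')*u*t^2 - x*(s*t) + a'*s^2) := by
        rw [hv]
        field_simp
      rw [hid]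
      exact mul_neg_of_pos_of_neg (by positivity) hG
    have hFv : 0 ≤ (1-a)*v^2 - x^2*v + a*u*x^2 := by
      have hid : (1-a)*v^2 - x^2*v + a*u*x^2
          = (x^2/s^2) * ((1-a)*t^2 - x*(s*t) + a*u*s^2) := by
        rw [hv]
        field_simp
      rw [hid]
      exact mul_nonneg (by positivity) hF
    exact turan_core a a' u x v ha' haa ha1 hu0' hu1 hx0 hxu hC1 hFv hGv

private lemma turan_fbounds (A B : ℝ) (hB : 1/2 < B) (hBA : B ≤ A) (hA : A < 1) :
    0 ≤ 2*Real.log ((1-A)*B/((1-B)*A)) / Real.log (4*(1-A)*B^2/A) ∧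
    2*Real.log ((1-A)*B/((1-B)*A)) / Real.log (4*(1-A)*B^2/A) ≤ 2 := by
  have hApos : (0:ℝ) < A := by linarith
  have hBpos : (0:ℝ) < B := by linarith
  have hgA : (0:ℝ) < 1 - A := by linarith
  have hgB : (0:ℝ) < 1 - B := by linarith
  have hRpos : 0 < (1-A)*B/((1-B)*A) := by positivity
  have hR1 : (1-A)*B/((1-B)*A) ≤ 1 := by
    rw [div_le_one (by positivity)]
    nlinarith
  have hDpos : 0 < 4*(1-A)*B^2/A := by positivity
  have hD1 : 4*(1-A)*B^2/A < 1 := by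
    rw [div_lt_one hApos]
    nlinarith [mul_nonneg (mul_nonneg hgA.le (by linarith : (0:ℝ) ≤ A - B)) (by linarith : (0:ℝ) ≤ A + B),
      mul_pos hApos (mul_pos (by linarith : (0:ℝ) < 2*A - 1) (by linarith : (0:ℝ) < 2*A - 1))]
  have hDR : 4*(1-A)*B^2/A ≤ (1-A)*B/((1-B)*A) := by
    rw [div_le_div_iff₀ hApos (by positivity)]
    nlinarith [mul_nonneg (mul_nonneg (mul_nonneg hgA.le hBpos.le) hApos.le)
      (sq_nonneg (2*B - 1))]
  have hLR : Real.log ((1-A)*B/((1-B)*A)) ≤ 0 := Real.log_nonpos hRpos.le hR1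
  have hLD : Real.log (4*(1-A)*B^2/A) < 0 := Real.log_neg hDpos hD1
  have hLDR : Real.log (4*(1-A)*B^2/A) ≤ Real.log ((1-A)*B/((1-B)*A)) :=
    (Real.log_le_log_iff hDpos hRpos).2 hDR
  constructor
  · exact div_nonneg_of_nonpos (by linarith) hLD.le
  · rw [div_le_iff_of_neg hLD]
    linarith

private lemma turan_logstep (A B θ x : ℝ) (hB : 1/2 < B) (hBA : B ≤ A) (hA : A < 1)
    (hxne : x ≠ 0) (hx1 : |x| ≤ 1) (hθ0 : 0 ≤ θ)
    (hθt : θ ≤ 2*Real.log ((1-A)*B/((1-B)*A)) / Real.log (4*(1-A)*B^2/A))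
    (hcaseB : 4*B*(1-B)*(|x| ^ θ) < x^2) : (1-A)*B ≤ (1-B)*A*(|x| ^ θ) := by
  have hApos : (0:ℝ) < A := by linarith
  have hBpos : (0:ℝ) < B := by linarith
  have hgA : (0:ℝ) < 1 - A := by linarith
  have hgB : (0:ℝ) < 1 - B := by linarith
  have hy : 0 < |x| := abs_pos.2 hxne
  have hu : 0 < |x| ^ θ := Real.rpow_pos_of_pos hy θ
  have hQpos : (0:ℝ) < 4*B*(1-B) := by positivity
  have hRpos : 0 < (1-A)*B/((1-B)*A) := by positivity
  have hR1 : (1-A)*B/((1-B)*A) ≤ 1 := by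
    rw [div_le_one (by positivity)]
    nlinarith
  have hDQR : Real.log (4*(1-A)*B^2/A)
      = Real.log (4*B*(1-B)) + Real.log ((1-A)*B/((1-B)*A)) := by
    rw [← Real.log_mul (ne_of_gt hQpos) (ne_of_gt hRpos)]
    congr 1
    field_simp
  have hLQ : Real.log (4*B*(1-B)) < 0 :=
    Real.log_neg hQpos (by nlinarith [sq_nonneg (2*B-1), mul_pos (by linarith : (0:ℝ) < 2*B-1) (by linarith : (0:ℝ) < 2*B-1)])
  have hLR : Real.log ((1-A)*B/((1-B)*A)) ≤ 0 := Real.log_nonpos hRpos.le hR1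
  have hLD : Real.log (4*(1-A)*B^2/A) < 0 := by rw [hDQR]; linarith
  have hX : Real.log |x| ≤ 0 := Real.log_nonpos hy.le hx1
  have hLU : Real.log (|x| ^ θ) = θ * Real.log |x| := Real.log_rpow hy θ
  have hlt : Real.log (4*B*(1-B)) + Real.log (|x| ^ θ) < 2 * Real.log |x| := by
    have h1 : Real.log (4*B*(1-B)*(|x| ^ θ)) < Real.log (|x|^(2:ℕ)) := by
      apply Real.log_lt_log (by positivity)
      rw [← sq_abs] at hcaseB
      exact hcaseB
    rw [Real.log_mul (ne_of_gt hQpos) (ne_of_gt hu), Real.log_pow] at h1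
    push_cast at h1
    linarith
  set T := 2*Real.log ((1-A)*B/((1-B)*A)) / Real.log (4*(1-A)*B^2/A) with hT
  have hT0 : 0 ≤ T := (turan_fbounds A B hB hBA hA).1
  have hTD : T * Real.log (4*(1-A)*B^2/A) = 2*Real.log ((1-A)*B/((1-B)*A)) :=
    div_mul_cancel₀ _ (ne_of_lt hLD)
  have hUX : T * Real.log |x| ≤ θ * Real.log |x| :=
    mul_le_mul_of_nonpos_right hθt hX
  have hTX : T * (Real.log (4*B*(1-B)) + Real.log (|x| ^ θ)) ≤ T * (2 * Real.log |x|) :=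
    mul_le_mul_of_nonneg_left hlt.le hT0
  have h2T : 0 < 2 - T := by
    by_contra h
    push_neg at h
    have h1 : 0 ≤ (2 - T) * Real.log (4*(1-A)*B^2/A) := by
      nlinarith [mul_nonneg (neg_nonneg.2 (by linarith : 2 - T ≤ 0)) (neg_nonneg.2 hLD.le)]
    linarith [h1, hTD, hDQR, hLQ]
  have hmul : T * Real.log (4*(1-A)*B^2/A)
      = T * (Real.log (4*B*(1-B)) + Real.log ((1-A)*B/((1-B)*A))) := by rw [hDQR]
  have hlin : (2 - T) * Real.log ((1-A)*B/((1-B)*A)) ≤ (2 - T) * Real.log (|x| ^ θ) := by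
    linarith [hTX, hUX, hTD, hmul, hLU]
  have hloglog : Real.log ((1-A)*B/((1-B)*A)) ≤ Real.log (|x| ^ θ) := by
    by_contra h
    push_neg at h
    have := mul_lt_mul_of_pos_left h h2T
    linarith
  have hRu : (1-A)*B/((1-B)*A) ≤ |x| ^ θ := (Real.log_le_log_iff hRpos hu).1 hloglog
  rw [div_le_iff₀ (by positivity)] at hRu
  linarith [hRu]

theorem general_turan_decreasing
    (a : ℕ → ℝ) (ha0 : a 0 = 0)
    (hab : ∀ n : ℕ, 1 ≤ n → 1/2 < a n ∧ a n < 1)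
    (hdec : ∀ n : ℕ, 1 ≤ n → a (n + 1) ≤ a n)
    (p : ℕ → ℝ → ℝ) (hp0 : ∀ x, p 0 x = 1)
    (hrec : ∀ n : ℕ, ∀ x : ℝ,
      (1 - a n) * p (n + 1) x = x * p n x - a n * p (n - 1) x)
    (θ : ℝ)
    (hθ : θ = ⨅ n : ℕ,
      (2 * Real.log ((1 - a (n + 1)) * a (n + 2) / ((1 - a (n + 2)) * a (n + 1))))
        / Real.log (4 * (1 - a (n + 1)) * (a (n + 2)) ^ 2 / a (n + 1)))
    (n : ℕ) (hn : 1 ≤ n) (x : ℝ) (hx : |x| ≤ 1) :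
    |x| ^ θ * (p n x) ^ 2 - p (n - 1) x * p (n + 1) x ≥ 0 := by
  set u := |x| ^ θ with hu
  have hbdd : BddBelow (Set.range fun k : ℕ =>
      (2 * Real.log ((1 - a (k + 1)) * a (k + 2) / ((1 - a (k + 2)) * a (k + 1))))
        / Real.log (4 * (1 - a (k + 1)) * (a (k + 2)) ^ 2 / a (k + 1))) := by
    refine ⟨0, ?_⟩
    rintro y ⟨k, rfl⟩
    exact (turan_fbounds (a (k+1)) (a (k+2)) (hab (k+2) (by omega)).1
      (hdec (k+1) (by omega)) (hab (k+1) (by omega)).2).1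
  have hθ0 : 0 ≤ θ := by
    rw [hθ]
    exact le_ciInf fun k => (turan_fbounds (a (k+1)) (a (k+2)) (hab (k+2) (by omega)).1
      (hdec (k+1) (by omega)) (hab (k+1) (by omega)).2).1
  have hθle : ∀ k : ℕ, θ ≤
      (2 * Real.log ((1 - a (k + 1)) * a (k + 2) / ((1 - a (k + 2)) * a (k + 1))))
        / Real.log (4 * (1 - a (k + 1)) * (a (k + 2)) ^ 2 / a (k + 1)) := by
    intro k
    rw [hθ]
    exact ciInf_le hbdd k
  have hθ2 : θ ≤ 2 :=
    le_trans (hθle 0) (turan_fbounds (a 1) (a 2) (hab 2 (by omega)).1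
      (hdec 1 (by omega)) (hab 1 (by omega)).2).2
  have hu0 : 0 ≤ u := Real.rpow_nonneg (abs_nonneg x) θ
  have hu1 : u ≤ 1 := Real.rpow_le_one (abs_nonneg x) hx hθ0
  have hx2u : x^2 ≤ u := by
    by_cases hx0 : x = 0
    · rw [hx0]
      simpa using hu0
    · have hy : 0 < |x| := abs_pos.2 hx0
      have h1 : |x|^(2:ℝ) ≤ |x|^θ := Real.rpow_le_rpow_of_exponent_ge hy hx hθ2
      have h2 : |x|^(2:ℝ) = x^2 := by
        rw [show (2:ℝ) = ((2:ℕ):ℝ) by norm_num, Real.rpow_natCast]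
        exact sq_abs x
      rw [h2] at h1
      exact h1
  have hp1 : p 1 x = x := by
    have h := hrec 0 x
    rw [ha0, hp0] at h
    simpa using h
  have key : ∀ k : ℕ, 0 ≤ (1 - a (k+1)) * (p (k+2) x)^2
      - x * (p (k+1) x * p (k+2) x) + a (k+1) * u * (p (k+1) x)^2 := by
    intro k
    induction k with
    | zero =>
      obtain ⟨ha1l, ha1r⟩ := hab 1 le_rfl
      have hc : (1 - a 1) * p 2 x = x * x - a 1 := by
        have h := hrec 1 x
        rw [hp1] at h
        simpa [hp0] using h
      have hx2 : x^2 ≤ 1 := by nlinarith [sq_abs x, abs_nonneg x, hx]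
      have hin1 : (0:ℝ) ≤ a 1 - (1 - a 1)*x^2 := by
        nlinarith [mul_nonneg (show (0:ℝ) ≤ 1 - a 1 by linarith)
          (show (0:ℝ) ≤ 1 - x^2 by linarith)]
      have inner : 0 ≤ a 1 - x^2 + (1 - a 1)*u*x^2 := by
        nlinarith [mul_nonneg (show (0:ℝ) ≤ 1 - x^2 by linarith) hin1,
          mul_nonneg (mul_nonneg (show (0:ℝ) ≤ 1 - a 1 by linarith) (sq_nonneg x))
            (show (0:ℝ) ≤ u - x^2 by linarith)]
      have hmain : 0 ≤ a 1 * (a 1 - x^2 + (1 - a 1)*u*x^2) :=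
        mul_nonneg (by linarith) inner
      show 0 ≤ (1 - a 1) * (p 2 x)^2 - x * (p 1 x * p 2 x) + a 1 * u * (p 1 x)^2
      apply turan_nonneg_of_mul (show (0:ℝ) < 1 - a 1 by linarith)
      have hid : (1 - a 1) * ((1 - a 1) * (p 2 x)^2
          - x * (p 1 x * p 2 x) + a 1 * u * (p 1 x)^2)
          = a 1 * (a 1 - x^2 + (1 - a 1)*u*x^2) := by
        rw [hp1]
        linear_combination ((1 - a 1) * p 2 x - a 1) * hc
      rw [hid]
      exact hmain
    | succ m ih =>
      obtain ⟨hAl, hAr⟩ := hab (m+1) (by omega)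
      obtain ⟨hBl, hBr⟩ := hab (m+2) (by omega)
      have hBA : a (m+2) ≤ a (m+1) := hdec (m+1) (by omega)
      have hor : x^2 ≤ 4 * a (m+2) * (1 - a (m+2)) * u ∨
          (1 - a (m+1)) * a (m+2) ≤ (1 - a (m+2)) * a (m+1) * u := by
        by_cases hcb : x^2 ≤ 4 * a (m+2) * (1 - a (m+2)) * u
        · exact Or.inl hcb
        · right
          push_neg at hcb
          have hxne : x ≠ 0 := by
            intro h0
            rw [h0] at hcb
            have h9 : (0:ℝ) ≤ 4 * a (m+2) * (1 - a (m+2)) * u :=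
              mul_nonneg (mul_nonneg (mul_nonneg (by norm_num)
                (by linarith)) (by linarith)) hu0
            nlinarith [h9]
          have := turan_logstep (a (m+1)) (a (m+2)) θ x hBl hBA hAr hxne hx hθ0
            (hθle m) (by rw [← hu]; linarith)
          rw [← hu] at this
          exact this
      have hG := turan_step (a (m+1)) (a (m+2)) u x (p (m+1) x) (p (m+2) x)
        hBl hBA hAr hu0 hu1 hx2u hor ih
      have hc : (1 - a (m+2)) * p (m+3) x = x * p (m+2) x - a (m+2) * p (m+1) x := by
        have h := hrec (m+2) x
        have e : m + 2 - 1 = m + 1 := by omega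
        rw [e] at h
        exact h
      apply turan_nonneg_of_mul (show (0:ℝ) < 1 - a (m+2) by linarith)
      have hid : (1 - a (m+2)) * ((1 - a (m+2)) * (p (m+3) x)^2
          - x * (p (m+2) x * p (m+3) x) + a (m+2) * u * (p (m+2) x)^2)
          = a (m+2) * ((1 - a (m+2))*u*(p (m+2) x)^2
            - x * (p (m+1) x * p (m+2) x) + a (m+2) * (p (m+1) x)^2) := by
        linear_combination ((1 - a (m+2)) * p (m+3) x - a (m+2) * p (m+1) x) * hc
      rw [hid]
      exact mul_nonneg (by linarith) hG
  obtain ⟨m, rfl⟩ : ∃ m, n = m + 1 := ⟨n - 1, by omega⟩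
  have hF := key m
  obtain ⟨hAl, hAr⟩ := hab (m+1) (by omega)
  have hc : (1 - a (m+1)) * p (m+2) x = x * p (m+1) x - a (m+1) * p m x := by
    have h := hrec (m+1) x
    have e : m + 1 - 1 = m := by omega
    rw [e] at h
    exact h
  have hid : (a (m+1) * (1 - a (m+1))) * (u * (p (m+1) x)^2 - p m x * p (m+2) x)
      = (1 - a (m+1)) * ((1 - a (m+1)) * (p (m+2) x)^2
        - x * (p (m+1) x * p (m+2) x) + a (m+1) * u * (p (m+1) x)^2) := by
    linear_combination (-((1 - a (m+1)) * p (m+2) x)) * hc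
  have h7 : 0 ≤ u * (p (m+1) x)^2 - p m x * p (m+2) x := by
    apply turan_nonneg_of_mul (show (0:ℝ) < a (m+1) * (1 - a (m+1)) by
      apply mul_pos <;> linarith)
    rw [hid]
    exact mul_nonneg (by linarith) hF
  have e : m + 1 - 1 = m := by omega
  rw [ge_iff_le, e]
  exact h7
end

section
/- Under the hypotheses of the generalized Turán theorem (a_1 ∈ (1/2,1), p_0 = 1, p_1(x) = x, (1-a_1)p_2(x) = x² - a_1) and for any 0 ≤ θ < 2 and 0 < x < 1, the base case holds: x^{2θ} - (x² - a_1)/(1 - a_1) > (1-x²)(2a_1 - 1)/(1 - a_1) > 0; in particular x^θ p_1(x)² - p_0(x) p_2(x) > 0. -/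
theorem general_turan_base_case
    (a₁ : ℝ) (ha1 : 1/2 < a₁) (ha2 : a₁ < 1)
    (θ : ℝ) (hθ1 : 0 ≤ θ) (hθ2 : θ < 2)
    (x : ℝ) (hx1 : 0 < x) (hx2 : x < 1) :
    x ^ (2 * θ) - (x ^ 2 - a₁) / (1 - a₁) > (1 - x ^ 2) * (2 * a₁ - 1) / (1 - a₁) ∧
    (1 - x ^ 2) * (2 * a₁ - 1) / (1 - a₁) > 0 ∧
    x ^ θ * x ^ 2 - 1 * ((x ^ 2 - a₁) / (1 - a₁)) > 0 := by
  have h1a : (0:ℝ) < 1 - a₁ := by linarith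
  have h4 : x ^ ((4:ℕ):ℝ) = x ^ (4:ℕ) := Real.rpow_natCast x 4
  have h1 : (x:ℝ) ^ (4:ℕ) ≤ x ^ (2*θ) := by
    rw [← h4]
    exact Real.rpow_le_rpow_of_exponent_ge hx1 hx2.le (by push_cast; linarith)
  have h2r : x ^ ((2:ℕ):ℝ) = x ^ (2:ℕ) := Real.rpow_natCast x 2
  have h2 : (x:ℝ) ^ (2:ℕ) ≤ x ^ θ := by
    rw [← h2r]
    exact Real.rpow_le_rpow_of_exponent_ge hx1 hx2.le (by push_cast; linarith)
  have hxx : (0:ℝ) < 1 - x ^ 2 := by nlinarith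
  refine ⟨?_, ?_, ?_⟩
  · rw [gt_iff_lt, div_lt_iff₀ h1a]
    have key : ((x ^ (2*θ) - (x ^ 2 - a₁) / (1 - a₁)) * (1 - a₁))
        = x ^ (2*θ) * (1 - a₁) - (x ^ 2 - a₁) := by
      field_simp
    rw [key]
    nlinarith [mul_le_mul_of_nonneg_right h1 h1a.le, mul_pos (mul_pos hxx hxx) h1a]
  · exact div_pos (mul_pos hxx (by linarith)) h1a
  · rw [gt_iff_lt, sub_pos, one_mul, div_lt_iff₀ h1a]
    have hp : (0:ℝ) < (1 - x^2) * (a₁ - (1 - a₁) * x^2) := by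
      apply mul_pos hxx
      nlinarith
    nlinarith [mul_le_mul_of_nonneg_right h2 (by positivity : (0:ℝ) ≤ x^2 * (1 - a₁)), hp]
end

section
/- Let 1/2 < a_{n+1} < a_n < 1, 0 < θ < 2, and 0 < x < 1 with x^θ > a_{n+1}(1-a_n)/(a_n(1-a_{n+1})). Set A = a_n(1-a_{n+1})x^{2θ} - (1-a_n)a_{n+1}, B = a_{n+1} - a_n x^θ, C = 1 - a_n - (1-a_{n+1})x^θ. Then A² - x² B C > 0. -/
theorem general_resultant_positive
    (an an1 : ℝ) (h1 : 1/2 < an1) (h2 : an1 < an) (h3 : an < 1)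
    (θ : ℝ) (hθ1 : 0 < θ) (hθ2 : θ < 2)
    (x : ℝ) (hx1 : 0 < x) (hx2 : x < 1)
    (hx3 : x ^ θ > an1 * (1 - an) / (an * (1 - an1))) :
    (an * (1 - an1) * x ^ (2 * θ) - (1 - an) * an1) ^ 2
      - x ^ 2 * (an1 - an * x ^ θ) * (1 - an - (1 - an1) * x ^ θ) > 0 := by
  set t := x ^ θ with htdef
  have ht0 : 0 < t := Real.rpow_pos_of_pos hx1 θ
  have ht1 : t < 1 := Real.rpow_lt_one hx1.le hx2 hθ1
  have h2t : x ^ (2 * θ) = t ^ 2 := by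
    rw [htdef, mul_comm, Real.rpow_mul hx1.le, Real.rpow_two]
  have hxsq : x ^ 2 < t := by
    have := Real.rpow_lt_rpow_of_exponent_gt hx1 hx2 hθ2
    rwa [Real.rpow_two] at this
  have hden : 0 < an * (1 - an1) := by nlinarith
  have hBgt : an1 * (1 - an) < an * (1 - an1) * t := by
    have := (div_lt_iff₀ hden).mp hx3
    linarith [this]
  have huv : an1 * (1 - an) < an * (1 - an1) := by nlinarith
  have hpq : (2 * an - 1) * (2 * an1 - 1) > 0 := by nlinarith
  -- positivity of the quadratic factor H
  have hH : 0 < -(an * (1 - an1)) * t ^ 2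
      + (1 - an * (1 - an1) - an1 * (1 - an)) * t - an1 * (1 - an) := by
    nlinarith [mul_pos (sub_pos.2 hBgt) (mul_pos hden (sub_pos.2 ht1)),
      mul_pos (mul_pos hden hpq) (sub_pos.2 hBgt),
      mul_pos (mul_pos (mul_pos (by nlinarith : (0:ℝ) < an1 * (1 - an)) hpq) hden) (sub_pos.2 ht1),
      mul_pos hden ht0]
  have hE : 0 < (an * (1 - an1) * t ^ 2 - (1 - an) * an1) ^ 2
      - t * (an1 - an * t) * (1 - an - (1 - an1) * t) := by
    have hfac : (an * (1 - an1) * t ^ 2 - (1 - an) * an1) ^ 2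
        - t * (an1 - an * t) * (1 - an - (1 - an1) * t)
        = (1 - t) * (an * (1 - an1) * t - an1 * (1 - an))
          * (-(an * (1 - an1)) * t ^ 2
            + (1 - an * (1 - an1) - an1 * (1 - an)) * t - an1 * (1 - an)) := by
      ring
    rw [hfac]
    exact mul_pos (mul_pos (sub_pos.2 ht1) (sub_pos.2 hBgt)) hH
  rw [h2t]
  rcases le_or_gt 0 ((an1 - an * t) * (1 - an - (1 - an1) * t)) with hBC | hBC
  · nlinarith [mul_nonneg (sub_pos.2 hxsq).le hBC]
  · nlinarith [mul_pos (pow_pos hx1 2) (neg_pos.2 hBC),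
      sq_nonneg (an * (1 - an1) * t ^ 2 - (1 - an) * an1)]
end

section
/- Let p_n be monic symmetric orthogonal polynomials defined by p_{-1} = 0, p_0 = 1, p_{n+1}(x) = x p_n(x) - a_n p_{n-1}(x) where (a_n)_{n≥1} is a positive increasing sequence (set a_0 = 0). Then for all n ≥ 1 and all real x, (x²/(x² + a_n - a_{n-1})) · p_n(x)² - p_{n-1}(x) p_{n+1}(x) ≥ 0. -/
/-!
Write `u = pₙ₋₁`, `q = pₙ`, `r = pₙ₊₁`, `s = aₙ₋₁ pₙ₋₂` and `d = aₙ - aₙ₋₁ > 0`, so that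
`q = x u - s` and `r = x q - aₙ u`. The claim is `E := x² q² - (x² + d) u r ≥ 0`.
For `x² ≥ d` the identity `E = (x² - d) aₙ₋₁ Δₙ₋₁ + d (2 aₙ₋₁ + d) u² + d s²` reduces it to
the classical Turán inequality `Δₖ = pₖ² - pₖ₋₁ pₖ₊₁ ≥ 0`, which follows from
`Δₖ₊₁ = aₖ Δₖ + (aₖ₊₁ - aₖ) pₖ²`. For `x² ≤ d` the quadratic form `E` in `(u, s)` is
positive semidefinite on its own.
-/

/-- Junk at `n = 0`, where `n - 1 = 0` in `ℕ`. -/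
def turanDet (p : ℕ → ℝ → ℝ) (n : ℕ) (x : ℝ) : ℝ :=
  p n x ^ 2 - p (n - 1) x * p (n + 1) x

section ThreeTermRecurrence

variable {a : ℕ → ℝ} {p : ℕ → ℝ → ℝ}
  (hrec : ∀ n : ℕ, ∀ x : ℝ, p (n + 1) x = x * p n x - a n * p (n - 1) x)
include hrec

theorem turanDet_succ (m : ℕ) (x : ℝ) :
    turanDet p (m + 1) x = a m * turanDet p m x + (a (m + 1) - a m) * p m x ^ 2 := by
  simp only [turanDet, Nat.add_sub_cancel]
  rw [hrec (m + 1), hrec m, Nat.add_sub_cancel]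
  ring

theorem turanDet_succ_nonneg (ha0 : a 0 = 0) (ha : Monotone a) (m : ℕ) (x : ℝ) :
    0 ≤ turanDet p (m + 1) x := by
  have hstep (k : ℕ) : 0 ≤ a (k + 1) - a k := sub_nonneg.2 (ha k.le_succ)
  induction m with
  | zero =>
    simpa [turanDet_succ hrec, ha0] using mul_nonneg (hstep 0) (sq_nonneg (p 0 x))
  | succ m ih =>
    rw [turanDet_succ hrec]
    have ha_nonneg : 0 ≤ a (m + 1) := ha0 ▸ ha (Nat.zero_le _)
    exact add_nonneg (mul_nonneg ha_nonneg ih) (mul_nonneg (hstep _) (sq_nonneg _))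

theorem mul_turanDet_nonneg (ha0 : a 0 = 0) (ha : Monotone a) (m : ℕ) (x : ℝ) :
    0 ≤ a m * turanDet p m x := by
  cases m with
  | zero => simp [ha0]
  | succ m =>
    exact mul_nonneg (ha0 ▸ ha (Nat.zero_le _)) (turanDet_succ_nonneg hrec ha0 ha m x)

end ThreeTermRecurrence

theorem turan_quadratic_nonneg {x u s q r B d : ℝ} (hd : 0 < d) (hB : 0 ≤ B)
    (hW : 0 ≤ B * u ^ 2 - s * q) (hq : q = x * u - s) (hr : r = x * q - (B + d) * u) :
    0 ≤ x ^ 2 * q ^ 2 - (x ^ 2 + d) * (u * r) := by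
  subst hr hq
  rcases le_total d (x ^ 2) with hx | hx
  · have key : x ^ 2 * (x * u - s) ^ 2 - (x ^ 2 + d) * (u * (x * (x * u - s) - (B + d) * u)) =
        (x ^ 2 - d) * (B * u ^ 2 - s * (x * u - s)) + d * (2 * B + d) * u ^ 2 + d * s ^ 2 := by
      ring
    rw [key]
    have := mul_nonneg (sub_nonneg.2 hx) hW
    positivity
  · have key : x ^ 2 * (x * u - s) ^ 2 - (x ^ 2 + d) * (u * (x * (x * u - s) - (B + d) * u)) =
        (x * s + (d - x ^ 2) / 2 * u) ^ 2 + (d * B + d ^ 2 + B * x ^ 2 - (d - x ^ 2) ^ 2 / 4) * u ^ 2 := by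
      ring
    rw [key]
    have hcoef : 0 ≤ d * B + d ^ 2 + B * x ^ 2 - (d - x ^ 2) ^ 2 / 4 := by
      nlinarith [sq_nonneg x, mul_nonneg hd.le hB, mul_nonneg hB (sq_nonneg x)]
    positivity

theorem monic_symmetric_turan_general
    (a : ℕ → ℝ) (ha0 : a 0 = 0) (ha1 : 0 < a 1)
    (hinc : ∀ n : ℕ, 1 ≤ n → a n < a (n + 1))
    (p : ℕ → ℝ → ℝ)
    (hrec : ∀ n : ℕ, ∀ x : ℝ, p (n + 1) x = x * p n x - a n * p (n - 1) x)
    (n : ℕ) (hn : 1 ≤ n) (x : ℝ) :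
    x ^ 2 / (x ^ 2 + a n - a (n - 1)) * (p n x) ^ 2 - p (n - 1) x * p (n + 1) x ≥ 0 := by
  have ha : StrictMono a := strictMono_nat_of_lt_succ fun
    | 0 => ha0 ▸ ha1
    | k + 1 => hinc (k + 1) k.succ_pos
  obtain ⟨m, rfl⟩ : ∃ m, n = m + 1 := ⟨n - 1, by omega⟩
  simp only [Nat.add_sub_cancel]
  have hd : 0 < a (m + 1) - a m := sub_pos.2 (ha m.lt_succ_self)
  have hD : 0 < x ^ 2 + (a (m + 1) - a m) := by positivity
  have hE := turan_quadratic_nonneg (u := p m x) (s := a m * p (m - 1) x) (r := p (m + 2) x)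
    hd (ha0 ▸ ha.monotone m.zero_le)
    (by simpa [turanDet, mul_sub, mul_assoc] using mul_turanDet_nonneg hrec ha0 ha.monotone m x)
    (hrec m x) (by rw [hrec (m + 1), add_sub_cancel, Nat.add_sub_cancel])
  rw [ge_iff_le, add_sub_assoc, div_mul_eq_mul_div, div_sub' hD.ne']
  exact div_nonneg hE hD.le

theorem monic_symmetric_turan
    (a : ℕ → ℝ) (ha0 : a 0 = 0) (ha1 : 0 < a 1)
    (hinc : ∀ n : ℕ, 1 ≤ n → a n < a (n + 1))
    (p : ℕ → ℝ → ℝ) (hp0 : ∀ x, p 0 x = 1)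
    (hrec : ∀ n : ℕ, ∀ x : ℝ, p (n + 1) x = x * p n x - a n * p (n - 1) x)
    (n : ℕ) (hn : 1 ≤ n) (x : ℝ) :
    x ^ 2 / (x ^ 2 + a n - a (n - 1)) * (p n x) ^ 2 - p (n - 1) x * p (n + 1) x ≥ 0 :=
  monic_symmetric_turan_general a ha0 ha1 hinc p hrec n hn x
end

section
/- For the Hermite polynomials H_n (standard normalization, satisfying H_{n+1}(x) = 2x H_n(x) - 2n H_{n-1}(x)), the inequality (x²/(x² + 1/2)) H_n(x)² - H_{n-1}(x) H_{n+1}(x) ≥ 0 holds for all n ≥ 1 and all real x. Equivalently, (x² + 1/2) H_{n-1}(x) H_{n+1}(x) ≤ x² H_n(x)². -/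
/-- Key step: if the Turán-type quadratic form is nonnegative at level `N`,
it is nonnegative at level `N+1`. Here `u, v` play the roles of
`H_{N-1}, H_N` and `2*x*v - 2*N*u` is `H_{N+1}`. -/
lemma hermite_turan_step (N x u v : ℝ) (hN : 1 ≤ N)
    (hfn : x ^ 2 * v ^ 2 - 2 * (x ^ 2 + 1/2) * x * u * v
      + 2 * N * (x ^ 2 + 1/2) * u ^ 2 ≥ 0) :
    x ^ 2 * (2 * x * v - 2 * N * u) ^ 2
      - 2 * (x ^ 2 + 1/2) * x * v * (2 * x * v - 2 * N * u)
      + 2 * (N + 1) * (x ^ 2 + 1/2) * v ^ 2 ≥ 0 := by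
  rcases le_or_gt (x ^ 2) (1/2) with hx | hx
  · -- small x: complete the square directly
    have hp : (0:ℝ) < x ^ 2 + 1/2 := by positivity
    nlinarith [sq_nonneg ((x ^ 2 - 1/2) * v - 2 * N * x * u),
      mul_nonneg (mul_nonneg hp.le (by nlinarith : (0:ℝ) ≤ 2 * N + 2 - (x ^ 2 + 1/2))) (sq_nonneg v)]
  · -- large x: use the exact identity
    have hp : (0:ℝ) < x ^ 2 + 1/2 := by positivity
    have key : (x ^ 2 + 1/2) * (x ^ 2 * (2 * x * v - 2 * N * u) ^ 2
        - 2 * (x ^ 2 + 1/2) * x * v * (2 * x * v - 2 * N * u)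
        + 2 * (N + 1) * (x ^ 2 + 1/2) * v ^ 2)
        = 2 * N * (x ^ 2 - 1/2) * (x ^ 2 * v ^ 2 - 2 * (x ^ 2 + 1/2) * x * u * v
            + 2 * N * (x ^ 2 + 1/2) * u ^ 2)
          + 2 * N ^ 2 * (x ^ 2 + 1/2) * u ^ 2
          + (2 * N * x ^ 2 + (N + 1) * (x ^ 2 + 1/2)) * v ^ 2 := by ring
    nlinarith [mul_nonneg (mul_nonneg (by linarith : (0:ℝ) ≤ 2 * N) (by linarith : (0:ℝ) ≤ x ^ 2 - 1/2)) hfn,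
      mul_nonneg (mul_nonneg (by positivity : (0:ℝ) ≤ 2 * N ^ 2) hp.le) (sq_nonneg u),
      mul_nonneg (by nlinarith : (0:ℝ) ≤ 2 * N * x ^ 2 + (N + 1) * (x ^ 2 + 1/2)) (sq_nonneg v)]

theorem hermite_turan
    (H : ℕ → ℝ → ℝ)
    (h0 : ∀ x, H 0 x = 1) (h1 : ∀ x, H 1 x = 2 * x)
    (hrec : ∀ n : ℕ, 1 ≤ n → ∀ x : ℝ,
      H (n + 1) x = 2 * x * H n x - 2 * (n : ℝ) * H (n - 1) x)
    (n : ℕ) (hn : 1 ≤ n) (x : ℝ) :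
    x ^ 2 / (x ^ 2 + 1/2) * (H n x) ^ 2 - H (n - 1) x * H (n + 1) x ≥ 0 ∧
    (x ^ 2 + 1/2) * (H (n - 1) x * H (n + 1) x) ≤ x ^ 2 * (H n x) ^ 2 := by
  -- main claim in quadratic-form shape, by induction
  have main : ∀ m : ℕ, x ^ 2 * (H (m + 1) x) ^ 2
      - 2 * (x ^ 2 + 1/2) * x * H m x * H (m + 1) x
      + 2 * ((m : ℝ) + 1) * (x ^ 2 + 1/2) * (H m x) ^ 2 ≥ 0 := by
    intro m
    induction m with
    | zero =>
      rw [h0, h1]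
      nlinarith [sq_nonneg x]
    | succ k ih =>
      have hr := hrec (k + 1) (by omega) x
      simp only [Nat.add_sub_cancel] at hr
      have := hermite_turan_step ((k : ℝ) + 1) x (H k x) (H (k + 1) x)
        (by linarith [Nat.cast_nonneg (α := ℝ) k]) ih
      rw [hr]
      push_cast
      linarith [this]
  obtain ⟨m, rfl⟩ : ∃ m, n = m + 1 := ⟨n - 1, by omega⟩
  have hr := hrec (m + 1) (by omega) x
  simp only [Nat.add_sub_cancel] at hr
  have hm := main m
  have hp : (0:ℝ) < x ^ 2 + 1/2 := by positivity
  have hf : x ^ 2 * (H (m + 1) x) ^ 2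
      - (x ^ 2 + 1/2) * (H m x * H (m + 1 + 1) x) ≥ 0 := by
    rw [hr]; push_cast; nlinarith
  constructor
  · have e : x ^ 2 / (x ^ 2 + 1/2) * (H (m + 1) x) ^ 2 - H (m + 1 - 1) x * H (m + 1 + 1) x
        = (x ^ 2 * (H (m + 1) x) ^ 2 - (x ^ 2 + 1/2) * (H m x * H (m + 1 + 1) x)) / (x ^ 2 + 1/2) := by
      simp only [Nat.add_sub_cancel]
      field_simp
    rw [e]
    exact div_nonneg hf hp.le
  · simp only [Nat.add_sub_cancel]
    linarith
end

section
/- Let a_n, d_n, d_{n+1} > 0 with a_{n+1} = a_n + d_{n+1}. The value of the quadratic T_n(τ) = (x² + d_n)τ² - (x² + d_n)xτ + a_n x², evaluated at x² = 3a_{n+1} + a_n and τ = 2a_{n+1}/√(3a_{n+1} + a_n), equals -(6d_{n+1}³ + (17a_n + 2d_n)d_{n+1}² + 6a_n(2a_n + d_n)d_{n+1} + 4a_n² d_n)/(3a_{n+1} + a_n), which is negative. -/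
theorem vertex_value_negative
    (an dn dn1 an1 : ℝ) (han : 0 < an) (hdn : 0 < dn) (hdn1 : 0 < dn1)
    (han1 : an1 = an + dn1) :
    ((Real.sqrt (3 * an1 + an)) ^ 2 + dn) * (2 * an1 / Real.sqrt (3 * an1 + an)) ^ 2
        - ((Real.sqrt (3 * an1 + an)) ^ 2 + dn) * Real.sqrt (3 * an1 + an)
          * (2 * an1 / Real.sqrt (3 * an1 + an))
        + an * (Real.sqrt (3 * an1 + an)) ^ 2
      = -(6 * dn1 ^ 3 + (17 * an + 2 * dn) * dn1 ^ 2 + 6 * an * (2 * an + dn) * dn1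
          + 4 * an ^ 2 * dn) / (3 * an1 + an) ∧
    -(6 * dn1 ^ 3 + (17 * an + 2 * dn) * dn1 ^ 2 + 6 * an * (2 * an + dn) * dn1
          + 4 * an ^ 2 * dn) / (3 * an1 + an) < 0 := by
  have hA : (0:ℝ) < 3 * an1 + an := by nlinarith
  have hs : Real.sqrt (3 * an1 + an) ^ 2 = 3 * an1 + an := Real.sq_sqrt hA.le
  have hsne : Real.sqrt (3 * an1 + an) ≠ 0 := by positivity
  constructor
  · have h1 : Real.sqrt (3 * an1 + an) * (2 * an1 / Real.sqrt (3 * an1 + an)) = 2 * an1 := by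
      field_simp
    have h2 : (2 * an1 / Real.sqrt (3 * an1 + an)) ^ 2 = 4 * an1 ^ 2 / (3 * an1 + an) := by
      rw [div_pow, hs]; ring_nf
    rw [h2, hs, mul_assoc, h1, han1]
    have hA' : (0:ℝ) < 3 * (an + dn1) + an := by nlinarith
    field_simp
    ring
  · apply div_neg_of_neg_of_pos _ hA
    have : 0 < 6 * dn1 ^ 3 + (17 * an + 2 * dn) * dn1 ^ 2 + 6 * an * (2 * an + dn) * dn1
        + 4 * an ^ 2 * dn := by positivity
    linarith
end
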